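/- Let n ≥ 2 and let f : (0,1) → [0,1]^n be any function, and let G = ⋃_{t ∈ (0,1)} {y ∈ ℝ^n : ‖y − f(t)‖_∞ = t/2}. Then the Assouad dimension of G is at least n − 1/2. -/

import Mathlib

open Set Metric MeasureTheory Filter Topology
open scoped ENNReal

/-- Minimal number of closed balls of radius `r` needed to cover `F`. -/
noncomputable def coverNum {X : Type*} [PseudoMetricSpace X] (F : Set X) (r : ℝ) : ℕ :=
  sInf {m : ℕ | ∃ s : Finset X, s.card = m ∧ F ⊆ ⋃ x ∈ s, closedBall x r}

/-- Lower box(-counting) dimension. -/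
noncomputable def lowerBoxDim {X : Type*} [PseudoMetricSpace X] (F : Set X) : ℝ :=
  liminf (fun r : ℝ => Real.log (coverNum F r) / (- Real.log r)) (𝓝[>] 0)

/-- Upper box(-counting) dimension. -/
noncomputable def upperBoxDim {X : Type*} [PseudoMetricSpace X] (F : Set X) : ℝ :=
  limsup (fun r : ℝ => Real.log (coverNum F r) / (- Real.log r)) (𝓝[>] 0)

/-- Assouad dimension. -/
noncomputable def assouadDim {X : Type*} [PseudoMetricSpace X] (F : Set X) : ℝ :=
  sInf {s : ℝ | 0 ≤ s ∧ ∃ C > 0, ∀ x ∈ F, ∀ R > 0, ∀ r : ℝ, 0 < r → r < R →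
    (coverNum (F ∩ closedBall x R) r : ℝ) ≤ C * (R / r) ^ s}

/-!
The set lies in a cube of side `2`, so an admissible exponent `s` in the definition of the
Assouad dimension bounds its `r`-covering number by `O(r^(-s))`; it suffices to find
`≳ r^(-(n - 1/2))` points of the set that are pairwise more than `2r` apart.

For `t = 2rp ∈ [1/2, 1)` the top face (height `f t 0 + t/2`) and the bottom face
(height `f t 0 - t/2`) of the cube of side `t` fall into height buckets of width `2r` whose
indices differ by exactly `p`. So the pair of buckets determines `p`, and the top faces or the
bottom faces occupy at least `√(#p) ≈ r^(-1/2)` distinct buckets. Keeping the buckets of one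
parity, these faces are pairwise more than `2r` apart in the first coordinate, and each of them
carries a grid of mesh `3r` with `≈ r^(-(n-1))` points.
-/

lemma coverNum_le_card {X : Type*} [PseudoMetricSpace X] {F : Set X} {r : ℝ} {s : Finset X}
    (h : F ⊆ ⋃ x ∈ s, closedBall x r) : coverNum F r ≤ s.card :=
  Nat.sInf_le ⟨s, rfl, h⟩

lemma card_le_coverNum_of_pairwise_lt_dist {X α : Type*} [PseudoMetricSpace X] {F : Set X}
    {r : ℝ} (hF : ∃ s : Finset X, F ⊆ ⋃ x ∈ s, closedBall x r) (P : Finset α)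
    (p : α → X) (hpF : ∀ i ∈ P, p i ∈ F)
    (hsep : (P : Set α).Pairwise fun i j => 2 * r < dist (p i) (p j)) :
    P.card ≤ coverNum F r := by
  obtain ⟨s, hcard, hs⟩ := Nat.sInf_mem (s := {m : ℕ | ∃ s : Finset X, s.card = m ∧
    F ⊆ ⋃ x ∈ s, closedBall x r}) (let ⟨s, hs⟩ := hF; ⟨s.card, s, rfl, hs⟩)
  rcases P.eq_empty_or_nonempty with rfl | ⟨i₀, -⟩
  · simp
  have : Nonempty X := ⟨p i₀⟩
  have hcenter : ∀ i ∈ P, ∃ c ∈ s, dist (p i) c ≤ r := fun i hi => by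
    simpa using hs (hpF i hi)
  choose! c hcs hpc using hcenter
  rw [coverNum, ← hcard]
  refine Finset.card_le_card_of_injOn c hcs fun i hi j hj hij => ?_
  by_contra hne
  refine (hsep hi hj hne).not_ge ?_
  calc dist (p i) (p j) ≤ dist (p i) (c i) + dist (p j) (c j) := by
        rw [hij]; exact dist_triangle_right _ _ _
    _ ≤ 2 * r := by linarith [hpc i hi, hpc j hj]

lemma abs_sub_nat_floor_le {r z : ℝ} (hr : 0 < r) (hz : 0 ≤ z) :
    |z - (r + 2 * r * ⌊z / (2 * r)⌋₊)| ≤ r := by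
  have h2r : 0 < 2 * r := by positivity
  have hlo : 2 * r * ⌊z / (2 * r)⌋₊ ≤ z := by
    rw [mul_comm, ← le_div_iff₀ h2r]; exact Nat.floor_le (by positivity)
  have hhi : z < 2 * r * (⌊z / (2 * r)⌋₊ + 1) := by
    rw [mul_comm, ← div_lt_iff₀ h2r]; exact Nat.lt_floor_add_one _
  rw [abs_le]; constructor <;> nlinarith

lemma exists_finset_closedBall_subset_iUnion {ι : Type*} [Fintype ι] (x : ι → ℝ) (R : ℝ)
    {r : ℝ} (hr : 0 < r) :
    ∃ s : Finset (ι → ℝ), s.card ≤ (⌊R / r⌋₊ + 1) ^ Fintype.card ι ∧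
      closedBall x R ⊆ ⋃ y ∈ s, closedBall y r := by
  classical
  set g : (ι → ℕ) → ι → ℝ := fun k i => x i - R + (r + 2 * r * k i)
  refine ⟨(Fintype.piFinset fun _ => Finset.range (⌊R / r⌋₊ + 1)).image g, ?_, ?_⟩
  · refine Finset.card_image_le.trans ?_
    simp
  intro y hy
  have hyx : ∀ i, |y i - x i| ≤ R := fun i => by
    simpa [Real.dist_eq] using (dist_pi_le_iff (dist_nonneg.trans hy)).1 hy i
  set k : ι → ℕ := fun i => ⌊(y i - x i + R) / (2 * r)⌋₊
  have hk : ∀ i, k i < ⌊R / r⌋₊ + 1 := fun i =>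
    Nat.lt_succ_of_le <| Nat.floor_le_floor <| by
      rw [div_le_div_iff₀ (by positivity) hr]; nlinarith [(abs_le.1 (hyx i)).2]
  simp only [mem_iUnion, Finset.mem_image, Fintype.mem_piFinset, Finset.mem_range]
  refine ⟨g k, ⟨k, hk, rfl⟩, (dist_pi_le_iff hr.le).2 fun i => ?_⟩
  rw [Real.dist_eq, show y i - g k i = (y i - x i + R) - (r + 2 * r * k i) by ring]
  exact abs_sub_nat_floor_le hr (by linarith [(abs_le.1 (hyx i)).1])

def IsAssouadExponent {X : Type*} [PseudoMetricSpace X] (F : Set X) (s : ℝ) : Prop :=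
  0 ≤ s ∧ ∃ C > 0, ∀ x ∈ F, ∀ R > 0, ∀ r : ℝ, 0 < r → r < R →
    (coverNum (F ∩ closedBall x R) r : ℝ) ≤ C * (R / r) ^ s

lemma isAssouadExponent_card {ι : Type*} [Fintype ι] (F : Set (ι → ℝ)) :
    IsAssouadExponent F (Fintype.card ι) := by
  refine ⟨by positivity, 2 ^ Fintype.card ι, by positivity, fun x _ R _ r hr hrR => ?_⟩
  obtain ⟨s, hcard, hs⟩ := exists_finset_closedBall_subset_iUnion x R hr
  have hRr : 1 ≤ R / r := (one_le_div hr).2 hrR.le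
  rw [Real.rpow_natCast, ← mul_pow]
  calc (coverNum (F ∩ closedBall x R) r : ℝ) ≤ s.card :=
        mod_cast coverNum_le_card (inter_subset_right.trans hs)
    _ ≤ (⌊R / r⌋₊ + 1 : ℕ) ^ Fintype.card ι := mod_cast hcard
    _ ≤ (2 * (R / r)) ^ Fintype.card ι := by
        gcongr; push_cast; linarith [Nat.floor_le (zero_le_one.trans hRr)]

lemma IsAssouadExponent.le_of_le_coverNum {X : Type*} [PseudoMetricSpace X] {F : Set X}
    {s : ℝ} (hs : IsAssouadExponent F s) {x₀ : X} (hx₀ : x₀ ∈ F) {R₀ : ℝ} (hR₀ : 0 < R₀)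
    (hF : F ⊆ closedBall x₀ R₀) {α c ε : ℝ} (hc : 0 < c) (hε : 0 < ε)
    (hlow : ∀ r ∈ Ioo 0 ε, c * r⁻¹ ^ α ≤ coverNum F r) : α ≤ s := by
  obtain ⟨-, C, hC, hup⟩ := hs
  by_contra! hsα
  -- `c ≤ C R₀^s r^(α - s)` for all small `r`, but the right side tends to `0`
  have hlim : Tendsto (fun r : ℝ => C * R₀ ^ s * r ^ (α - s)) (𝓝[>] 0) (𝓝 0) := by
    have := (Real.continuousAt_rpow_const 0 (α - s) (Or.inr (sub_pos.2 hsα).le)).tendsto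
    simpa [Real.zero_rpow (sub_pos.2 hsα).ne'] using
      (this.mono_left nhdsWithin_le_nhds).const_mul (C * R₀ ^ s)
  obtain ⟨r, hsmall, hr⟩ := ((hlim.eventually (gt_mem_nhds hc)).and
    (Ioo_mem_nhdsGT (lt_min hε hR₀))).exists
  have hrpos : 0 < r := hr.1
  have hbound : c * r⁻¹ ^ α ≤ C * R₀ ^ s * r⁻¹ ^ s := by
    calc c * r⁻¹ ^ α ≤ coverNum F r := hlow r ⟨hr.1, hr.2.trans_le (min_le_left _ _)⟩
      _ = coverNum (F ∩ closedBall x₀ R₀) r := by rw [inter_eq_left.2 hF]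
      _ ≤ C * (R₀ / r) ^ s :=
        hup x₀ hx₀ R₀ hR₀ r hr.1 (hr.2.trans_le (min_le_right _ _))
      _ = C * R₀ ^ s * r⁻¹ ^ s := by
        rw [div_eq_mul_inv, Real.mul_rpow hR₀.le (inv_nonneg.2 hrpos.le), mul_assoc]
  have hsplit : r⁻¹ ^ s = r⁻¹ ^ α * r ^ (α - s) := by
    rw [Real.inv_rpow hrpos.le, Real.inv_rpow hrpos.le, Real.rpow_sub hrpos]; field_simp
  have hbound' : c * r⁻¹ ^ α ≤ C * R₀ ^ s * r ^ (α - s) * r⁻¹ ^ α := by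
    rw [hsplit] at hbound; linarith
  linarith [le_of_mul_le_mul_right hbound' (by positivity)]

lemma one_le_abs_natCast_sub_natCast {a b : ℕ} (h : a ≠ b) : (1 : ℝ) ≤ |(a : ℝ) - b| := by
  exact_mod_cast Int.one_le_abs (sub_ne_zero.2 (Int.natCast_inj.not.2 h))

lemma lt_abs_sub_of_two_le_abs_floor_sub {ρ x y : ℝ} (hρ : 0 < ρ)
    (h : 2 ≤ |⌊x / ρ⌋ - ⌊y / ρ⌋|) : ρ < |x - y| := by
  have h' : (2 : ℝ) ≤ |(⌊x / ρ⌋ : ℝ) - ⌊y / ρ⌋| := by exact_mod_cast h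
  have hx₁ := (le_div_iff₀ hρ).1 (Int.floor_le (x / ρ))
  have hx₂ := (div_lt_iff₀ hρ).1 (Int.lt_floor_add_one (x / ρ))
  have hy₁ := (le_div_iff₀ hρ).1 (Int.floor_le (y / ρ))
  have hy₂ := (div_lt_iff₀ hρ).1 (Int.lt_floor_add_one (y / ρ))
  rw [lt_abs]
  rcases le_abs.1 h' with h' | h'
  · left; nlinarith
  · right; nlinarith

lemma card_le_card_image_mul_card_image {α β γ : Type*} [DecidableEq β] [DecidableEq γ]
    (D : Finset α) (a : α → β) (b : α → γ) (h : InjOn (fun p => (a p, b p)) D) :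
    D.card ≤ (D.image a).card * (D.image b).card := by
  rw [← Finset.card_product]
  exact Finset.card_le_card_of_injOn _ (fun p hp => Finset.mem_product.2
    ⟨Finset.mem_image_of_mem _ hp, Finset.mem_image_of_mem _ hp⟩) h

lemma exists_subset_pairwise_two_le_abs_sub {α : Type*} (D : Finset α) (β : α → ℤ) :
    ∃ P ⊆ D, (P : Set α).Pairwise (fun i j => 2 ≤ |β i - β j|) ∧
      (D.image β).card ≤ 2 * P.card := by
  obtain ⟨S, hSD, hinj, hSimg⟩ := Finset.exists_subset_injOn_image_eq_of_surjOn (D : Set α)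
    (D.image β) fun k hk => by simpa using hk
  have hS : (D.image β).card = S.card := by rw [← hSimg, Finset.card_image_of_injOn hinj]
  have hpar : ∀ b : ℤ, ((S.filter (β · % 2 = b)) : Set α).Pairwise
      (fun i j => 2 ≤ |β i - β j|) := by
    intro b i hi j hj hij
    simp only [Finset.coe_filter, mem_ofPred_eq] at hi hj
    have hne : β i ≠ β j := fun h => hij (hinj hi.1 hj.1 h)
    rw [le_abs]; omega
  have hsplit : S.card = (S.filter (β · % 2 = 0)).card + (S.filter (β · % 2 = 1)).card := by
    rw [← Finset.card_filter_add_card_filter_not (fun i => β i % 2 = 0)]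
    congr 2; exact Finset.filter_congr fun i _ => by omega
  have hsub : ∀ b : ℤ, S.filter (β · % 2 = b) ⊆ D := fun b =>
    (Finset.filter_subset _ _).trans (Finset.coe_subset.1 hSD)
  rcases le_total (S.filter (β · % 2 = 0)).card (S.filter (β · % 2 = 1)).card with hle | hle
  · exact ⟨_, hsub 1, hpar 1, by omega⟩
  · exact ⟨_, hsub 0, hpar 0, by omega⟩

def cubeBoundaries {ι : Type*} [Fintype ι] (f : ℝ → ι → ℝ) : Set (ι → ℝ) :=
  ⋃ t ∈ Ioo (0 : ℝ) 1, {y | ‖y - f t‖ = t / 2}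

section CubeBoundaries

variable {ι : Type*} [Fintype ι] {f : ℝ → ι → ℝ}

lemma cubeBoundaries_subset_closedBall
    (hf : ∀ t ∈ Ioo (0 : ℝ) 1, ∀ i, f t i ∈ Icc (0 : ℝ) 1) :
    cubeBoundaries f ⊆ closedBall (fun _ => 1 / 2) 1 := by
  intro y hy
  simp only [cubeBoundaries, mem_iUnion, mem_ofPred_eq] at hy
  obtain ⟨t, ht, hyt⟩ := hy
  refine (dist_pi_le_iff zero_le_one).2 fun i => ?_
  have hyi : |y i - f t i| ≤ t / 2 := hyt ▸ norm_le_pi_norm (y - f t) i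
  have hfi := hf t ht i
  rw [abs_le] at hyi
  rw [Real.dist_eq, abs_le]
  constructor <;> linarith [ht.1, ht.2, hfi.1, hfi.2]

lemma add_const_mem_cubeBoundaries [Nonempty ι] :
    f (1 / 2) + (fun _ => 1 / 4) ∈ cubeBoundaries f := by
  simp only [cubeBoundaries, mem_iUnion, mem_ofPred_eq]
  refine ⟨1 / 2, by norm_num, ?_⟩
  rw [add_sub_cancel_left, pi_norm_const]
  norm_num

lemma exists_finset_cubeBoundaries_subset_iUnion
    (hf : ∀ t ∈ Ioo (0 : ℝ) 1, ∀ i, f t i ∈ Icc (0 : ℝ) 1) {r : ℝ} (hr : 0 < r) :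
    ∃ s : Finset (ι → ℝ), cubeBoundaries f ⊆ ⋃ x ∈ s, closedBall x r :=
  let ⟨s, _, hs⟩ := exists_finset_closedBall_subset_iUnion (fun _ => 1 / 2) 1 hr
  ⟨s, (cubeBoundaries_subset_closedBall hf).trans hs⟩

end CubeBoundaries

noncomputable def faceHeight {m : ℕ} (f : ℝ → Fin (m + 1) → ℝ) (σ t : ℝ) : ℝ :=
  f t 0 + σ * (t / 2)

section Faces

variable {m : ℕ} {f : ℝ → Fin (m + 1) → ℝ}

lemma add_cons_mem_cubeBoundaries {t a : ℝ} {v : Fin m → ℝ} (ht : t ∈ Ioo 0 1)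
    (ha : |a| = t / 2) (hv : ∀ j, |v j| ≤ t / 2) : f t + Fin.cons a v ∈ cubeBoundaries f := by
  simp only [cubeBoundaries, mem_iUnion, mem_ofPred_eq]
  refine ⟨t, ht, ?_⟩
  rw [add_sub_cancel_left]
  refine le_antisymm ((pi_norm_le_iff_of_nonneg (by linarith [ht.1])).2 fun i => ?_) ?_
  · exact Fin.cases (by simpa using ha.le) (by simpa using hv) i
  · simpa [ha] using norm_le_pi_norm (Fin.cons a v : Fin (m + 1) → ℝ) 0

lemma card_mul_floor_pow_le_coverNum_cubeBoundaries
    (hf : ∀ t ∈ Ioo (0 : ℝ) 1, ∀ i, f t i ∈ Icc (0 : ℝ) 1) {r σ : ℝ} (hr : 0 < r)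
    (hσ : |σ| = 1) {α : Type*} (P : Finset α) (τ : α → ℝ) (hτ : ∀ i ∈ P, τ i ∈ Ico (1 / 2) 1)
    (hsep : (P : Set α).Pairwise
      fun i j => 2 * r < |faceHeight f σ (τ i) - faceHeight f σ (τ j)|) :
    P.card * ⌊1 / (6 * r)⌋₊ ^ m ≤ coverNum (cubeBoundaries f) r := by
  set K := ⌊1 / (6 * r)⌋₊
  have hK : 3 * r * K ≤ 1 / 2 := by
    have := Nat.floor_le (a := 1 / (6 * r)) (by positivity)
    rw [le_div_iff₀ (by positivity)] at this
    linarith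
  let point : α × (Fin m → Fin K) → Fin (m + 1) → ℝ := fun q =>
    f (τ q.1) + Fin.cons (σ * (τ q.1 / 2)) fun j => 3 * r * (q.2 j : ℕ) - τ q.1 / 2
  have hpoint₀ : ∀ q, point q 0 = faceHeight f σ (τ q.1) := fun q => by
    simp [point, faceHeight]
  have hpoint : ∀ q (j : Fin m),
      point q j.succ = f (τ q.1) j.succ + (3 * r * (q.2 j : ℕ) - τ q.1 / 2) := fun q j => by
    simp [point]
  have hcard : (P ×ˢ (Finset.univ : Finset (Fin m → Fin K))).card = P.card * K ^ m := by simp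
  rw [← hcard]
  refine card_le_coverNum_of_pairwise_lt_dist (exists_finset_cubeBoundaries_subset_iUnion hf hr)
    _ point (fun q hq => ?_) ?_
  · obtain ⟨hτ₁, hτ₂⟩ := hτ q.1 (Finset.mem_product.1 hq).1
    refine add_cons_mem_cubeBoundaries (t := τ q.1) ⟨by linarith, hτ₂⟩
      (by rw [abs_mul, hσ, one_mul, abs_of_nonneg]; linarith) fun j => ?_
    have hw : 3 * r * (q.2 j : ℕ) ≤ 3 * r * K := by gcongr; exact (q.2 j).isLt.le
    rw [abs_le]; constructor <;> nlinarith
  · rintro ⟨i, w⟩ hi ⟨i', w'⟩ hi' hne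
    by_cases hii' : i = i'
    · subst hii'
      obtain ⟨j, hj⟩ := Function.ne_iff.1 fun h : w = w' => hne (by rw [h])
      have hgap := one_le_abs_natCast_sub_natCast (Fin.val_injective.ne hj)
      have hdiff : point (i, w) j.succ - point (i, w') j.succ =
          3 * r * ((w j : ℕ) - (w' j : ℕ)) := by
        rw [hpoint, hpoint]; ring
      calc 2 * r < 3 * r * |((w j : ℕ) : ℝ) - (w' j : ℕ)| := by nlinarith
        _ = |point (i, w) j.succ - point (i, w') j.succ| := by
          rw [hdiff, abs_mul, abs_of_pos (by positivity : 0 < 3 * r)]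
        _ ≤ dist (point (i, w)) (point (i, w')) := by
          rw [← Real.dist_eq]; exact dist_le_pi_dist _ _ _
    · calc 2 * r < |faceHeight f σ (τ i) - faceHeight f σ (τ i')| :=
            hsep (Finset.mem_product.1 hi).1 (Finset.mem_product.1 hi').1 hii'
        _ = |point (i, w) 0 - point (i', w') 0| := by rw [hpoint₀, hpoint₀]
        _ ≤ dist (point (i, w)) (point (i', w')) := by
          rw [← Real.dist_eq]; exact dist_le_pi_dist _ _ _

end Faces

lemma exists_pairwise_lt_abs_faceHeight_sub {m : ℕ} (f : ℝ → Fin (m + 1) → ℝ) {r : ℝ}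
    (hr : 0 < r) (hr' : r ≤ 1 / 8) :
    ∃ σ : ℝ, |σ| = 1 ∧ ∃ P : Finset ℤ, (∀ p ∈ P, 2 * r * p ∈ Ico (1 / 2) 1) ∧
      (P : Set ℤ).Pairwise
        (fun p q => 2 * r < |faceHeight f σ (2 * r * p) - faceHeight f σ (2 * r * q)|) ∧
      1 / (8 * r) ≤ 4 * (P.card : ℝ) ^ 2 := by
  set D := Finset.Ico ⌈1 / (4 * r)⌉ ⌈1 / (2 * r)⌉
  have hD : ∀ p ∈ D, 2 * r * p ∈ Ico (1 / 2) 1 := by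
    intro p hp
    obtain ⟨hp₁, hp₂⟩ := Finset.mem_Ico.1 hp
    have h₁ := (div_le_iff₀ (by positivity)).1 (Int.ceil_le.1 hp₁)
    have h₂ := (lt_div_iff₀ (by positivity)).1 (Int.lt_ceil.1 hp₂)
    constructor <;> linarith
  have hDcard : 1 / (8 * r) ≤ D.card := by
    have h₁ : 1 / (2 * r) ≤ ⌈1 / (2 * r)⌉ := Int.le_ceil _
    have h₂ : (⌈1 / (4 * r)⌉ : ℝ) < 1 / (4 * r) + 1 := Int.ceil_lt_add_one _
    have h₃ : 1 ≤ 1 / (8 * r) := by rw [le_div_iff₀ (by positivity)]; linarith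
    have h₄ : ((⌈1 / (2 * r)⌉ - ⌈1 / (4 * r)⌉ : ℤ) : ℝ) ≤ D.card := by
      rw [Int.card_Ico]; exact_mod_cast Int.self_le_toNat _
    have h₅ : 1 / (2 * r) = 4 * (1 / (8 * r)) := by field_simp; norm_num
    have h₆ : 1 / (4 * r) = 2 * (1 / (8 * r)) := by field_simp; norm_num
    push_cast at h₄
    linarith
  -- the top and bottom faces of the cube of side `2 r p` lie `p` buckets of width `2 r` apart
  set bucket : ℝ → ℤ → ℤ := fun σ p => ⌊faceHeight f σ (2 * r * p) / (2 * r)⌋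
  have hbucket : ∀ p, bucket 1 p = bucket (-1) p + p := fun p => by
    simp only [bucket, ← Int.floor_add_intCast, faceHeight]
    congr 1
    field_simp; ring
  have hprod : D.card ≤ (D.image (bucket 1)).card * (D.image (bucket (-1))).card :=
    card_le_card_image_mul_card_image D _ _ fun p _ q _ hpq => by
      simp only [Prod.mk.injEq] at hpq
      linarith [hbucket p, hbucket q]
  obtain ⟨σ, hσ, hσD⟩ : ∃ σ : ℝ, |σ| = 1 ∧ D.card ≤ (D.image (bucket σ)).card ^ 2 := by
    rcases le_total (D.image (bucket 1)).card (D.image (bucket (-1))).card with hle | hle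
    · exact ⟨-1, by simp, hprod.trans (by rw [sq]; gcongr)⟩
    · exact ⟨1, by simp, hprod.trans (by rw [sq]; gcongr)⟩
  obtain ⟨P, hPD, hPsep, hPcard⟩ := exists_subset_pairwise_two_le_abs_sub D (bucket σ)
  refine ⟨σ, hσ, P, fun p hp => hD p (hPD hp), fun p hp q hq hpq =>
    lt_abs_sub_of_two_le_abs_floor_sub (by positivity) (hPsep hp hq hpq), ?_⟩
  have : (D.card : ℝ) ≤ (2 * P.card : ℕ) ^ 2 := by
    exact_mod_cast hσD.trans (Nat.pow_le_pow_left hPcard 2)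
  push_cast at this
  linarith

lemma exists_le_coverNum_cubeBoundaries {m : ℕ} {f : ℝ → Fin (m + 1) → ℝ}
    (hf : ∀ t ∈ Ioo (0 : ℝ) 1, ∀ i, f t i ∈ Icc (0 : ℝ) 1) :
    ∃ c > 0, ∀ r ∈ Ioo 0 (1 / 12),
      c * r⁻¹ ^ ((m : ℝ) + 1 / 2) ≤ coverNum (cubeBoundaries f) r := by
  refine ⟨√(1 / 32) * (1 / 12) ^ m, by positivity, fun r ⟨hr, hr'⟩ => ?_⟩
  obtain ⟨σ, hσ, P, hP, hPsep, hPcard⟩ :=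
    exists_pairwise_lt_abs_faceHeight_sub f hr (by linarith)
  have hcover := card_mul_floor_pow_le_coverNum_cubeBoundaries hf hr hσ P _ hP hPsep
  have hP : √(1 / 32) * √r⁻¹ ≤ P.card := by
    rw [← Real.sqrt_mul (by norm_num), Real.sqrt_le_iff]
    refine ⟨by positivity, ?_⟩
    have : 1 / (8 * r) = 4 * (1 / 32 * r⁻¹) := by field_simp; norm_num
    linarith
  have hK : 1 / 12 * r⁻¹ ≤ ⌊1 / (6 * r)⌋₊ := by
    have h₁ : 2 ≤ 1 / (6 * r) := by rw [le_div_iff₀ (by positivity)]; linarith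
    have h₂ : 1 / 12 * r⁻¹ = 1 / (6 * r) / 2 := by field_simp; norm_num
    linarith [Nat.lt_floor_add_one (1 / (6 * r))]
  calc √(1 / 32) * (1 / 12) ^ m * r⁻¹ ^ ((m : ℝ) + 1 / 2)
      = √(1 / 32) * √r⁻¹ * (1 / 12 * r⁻¹) ^ m := by
        rw [Real.rpow_add (by positivity), Real.rpow_natCast, ← Real.sqrt_eq_rpow, mul_pow]
        ring
    _ ≤ P.card * ⌊1 / (6 * r)⌋₊ ^ m := by gcongr
    _ ≤ coverNum (cubeBoundaries f) r := mod_cast hcover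

/-- Any set containing boundaries of axis-aligned cubes of all side
lengths in `(0,1)` has Assouad dimension at least `n - 1/2`. -/
theorem cube_packing_assouadDim_ge (n : ℕ) (hn : 2 ≤ n) (f : ℝ → (Fin n → ℝ))
    (hf : ∀ t ∈ Set.Ioo (0:ℝ) 1, ∀ i, f t i ∈ Set.Icc (0:ℝ) 1) :
    (n : ℝ) - 1/2 ≤
      assouadDim (⋃ t ∈ Set.Ioo (0:ℝ) 1, {y : Fin n → ℝ | ‖y - f t‖ = t / 2}) := by
  obtain ⟨m, rfl⟩ : ∃ m, n = m + 1 := ⟨n - 1, by omega⟩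
  change _ ≤ sInf {s | IsAssouadExponent (cubeBoundaries f) s}
  obtain ⟨c, hc, hlow⟩ := exists_le_coverNum_cubeBoundaries hf
  set x₀ := f (1 / 2) + fun _ => 1 / 4
  have hx₀ : x₀ ∈ cubeBoundaries f := add_const_mem_cubeBoundaries
  have hG : cubeBoundaries f ⊆ closedBall x₀ 2 := by
    refine (cubeBoundaries_subset_closedBall hf).trans (closedBall_subset_closedBall' ?_)
    linarith [mem_closedBall'.1 (cubeBoundaries_subset_closedBall hf hx₀)]
  refine le_csInf ⟨_, isAssouadExponent_card _⟩ fun s hs => ?_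
  have := hs.le_of_le_coverNum hx₀ two_pos hG hc (by norm_num) hlow
  push_cast
  linarith
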